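/- arXiv:2506.15326 — 8 statements merged into one kernel-verified Lean document; each statement's English description precedes it below -/
import Mathlib

section
/- The Wasserstein metric matrix Q satisfies (I - λN^T) Q (I - λN) = D̂_λ, where D̂_λ is the diagonal matrix with entries 1-λ² in the first n-1 positions and 1 in the last position. -/
open Matrix

private lemma NtM_apply {n : ℕ} (N M : Matrix (Fin n) (Fin n) ℝ)
    (hN : ∀ i j : Fin n, N i j = if (i : ℕ) = (j : ℕ) + 1 then 1 else 0)
    (i j : Fin n) :
    (Nᵀ * M) i j = if h : (i : ℕ) + 1 < n then M ⟨(i : ℕ)+1, h⟩ j else 0 := by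
  rw [Matrix.mul_apply]
  split
  · next h =>
    rw [Finset.sum_eq_single (⟨(i:ℕ)+1, h⟩ : Fin n)]
    · simp [Matrix.transpose_apply, hN]
    · intro k _ hk
      simp only [Matrix.transpose_apply, hN]
      rw [if_neg, zero_mul]
      intro hc
      exact hk (by exact Fin.ext hc)
    · simp
  · next h =>
    apply Finset.sum_eq_zero
    intro k _
    simp only [Matrix.transpose_apply, hN]
    rw [if_neg, zero_mul]
    intro hc
    exact h (hc ▸ k.isLt)

private lemma MN_apply {n : ℕ} (N M : Matrix (Fin n) (Fin n) ℝ)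
    (hN : ∀ i j : Fin n, N i j = if (i : ℕ) = (j : ℕ) + 1 then 1 else 0)
    (i j : Fin n) :
    (M * N) i j = if h : (j : ℕ) + 1 < n then M i ⟨(j : ℕ)+1, h⟩ else 0 := by
  rw [Matrix.mul_apply]
  split
  · next h =>
    rw [Finset.sum_eq_single (⟨(j:ℕ)+1, h⟩ : Fin n)]
    · simp [hN]
    · intro k _ hk
      simp only [hN]
      rw [if_neg, mul_zero]
      intro hc
      exact hk (by exact Fin.ext hc)
    · simp
  · next h =>
    apply Finset.sum_eq_zero
    intro k _
    simp only [hN]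
    rw [if_neg, mul_zero]
    intro hc
    exact h (hc ▸ k.isLt)

/-- `(I - λNᵀ) Q (I - λN) = D̂_λ`. -/
theorem wasserstein_congruence_diagonal (n : ℕ) (l : ℝ) (hl : l ∈ Set.Ioo (0:ℝ) 1)
    (Q : Matrix (Fin n) (Fin n) ℝ)
    (hQ : ∀ i j : Fin n, Q i j = l ^ (Nat.dist (i : ℕ) (j : ℕ)))
    (N : Matrix (Fin n) (Fin n) ℝ)
    (hN : ∀ i j : Fin n, N i j = if (i : ℕ) = (j : ℕ) + 1 then 1 else 0) :
    (1 - l • Nᵀ) * Q * (1 - l • N) =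
      Matrix.diagonal (fun i : Fin n => if (i : ℕ) + 1 < n then 1 - l ^ 2 else 1) := by
  have expand : (1 - l • Nᵀ) * Q * (1 - l • N)
      = Q - l • (Nᵀ * Q) - l • (Q * N) + (l * l) • (Nᵀ * (Q * N)) := by
    simp only [sub_mul, mul_sub, one_mul, mul_one, Matrix.smul_mul, Matrix.mul_smul,
      smul_smul, Matrix.mul_assoc]
    abel
  rw [expand]
  ext i j
  simp only [Matrix.add_apply, Matrix.sub_apply, Matrix.smul_apply, smul_eq_mul,
    NtM_apply N Q hN, NtM_apply N (Q * N) hN, MN_apply N Q hN, Matrix.diagonal_apply]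
  rcases eq_or_ne i j with rfl | hij
  · simp only [if_pos rfl]
    by_cases h : (i : ℕ) + 1 < n
    · simp only [dif_pos h, hQ]
      have d1 : Nat.dist ((i:ℕ)+1) (i:ℕ) = 1 := by simp [Nat.dist]
      have d2 : Nat.dist (i:ℕ) ((i:ℕ)+1) = 1 := by simp [Nat.dist]
      rw [d1, d2, Nat.dist_self, Nat.dist_self]
      have h' : 1 + (i:ℕ) < n := by omega
      rw [if_pos h]
      norm_num
      ring
    · simp [dif_neg h, hQ, h]
  · rw [if_neg hij]
    have hij' : (i : ℕ) ≠ (j : ℕ) := fun h => hij (Fin.ext h)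
    rcases lt_or_gt_of_ne hij' with hlt | hgt
    · -- i < j, so i+1 < n
      have hi : (i : ℕ) + 1 < n := lt_of_le_of_lt hlt j.isLt
      obtain ⟨e, he⟩ : ∃ e, (j : ℕ) = (i : ℕ) + e + 1 := ⟨(j:ℕ) - (i:ℕ) - 1, by omega⟩
      rw [dif_pos hi]
      have dij : Nat.dist (i:ℕ) (j:ℕ) = e + 1 := by simp [Nat.dist]; omega
      have di1j : Nat.dist ((i:ℕ)+1) (j:ℕ) = e := by simp [Nat.dist]; omega
      by_cases hj : (j : ℕ) + 1 < n
      · simp only [dif_pos hj, dif_pos hi]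
        have dij1 : Nat.dist (i:ℕ) ((j:ℕ)+1) = e + 2 := by simp [Nat.dist]; omega
        have di1j1 : Nat.dist ((i:ℕ)+1) ((j:ℕ)+1) = e + 1 := by simp [Nat.dist]; omega
        simp only [hQ, dij, di1j, dij1, di1j1]
        ring
      · simp only [dif_neg hj, hQ, dij, di1j]
        split_ifs <;> ring
    · -- j < i, so j+1 < n
      have hj : (j : ℕ) + 1 < n := lt_of_le_of_lt hgt i.isLt
      obtain ⟨e, he⟩ : ∃ e, (i : ℕ) = (j : ℕ) + e + 1 := ⟨(i:ℕ) - (j:ℕ) - 1, by omega⟩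
      rw [dif_pos hj]
      have dij : Nat.dist (i:ℕ) (j:ℕ) = e + 1 := by simp [Nat.dist]; omega
      have dij1 : Nat.dist (i:ℕ) ((j:ℕ)+1) = e := by simp [Nat.dist]; omega
      by_cases hi : (i : ℕ) + 1 < n
      · simp only [dif_pos hi, dif_pos hj]
        have di1j : Nat.dist ((i:ℕ)+1) (j:ℕ) = e + 2 := by simp [Nat.dist]; omega
        have di1j1 : Nat.dist ((i:ℕ)+1) ((j:ℕ)+1) = e + 1 := by simp [Nat.dist]; omega
        simp only [hQ, dij, di1j, dij1, di1j1]
        ring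
      · simp only [dif_neg hi, dif_pos hj, hQ, dij, dij1]
        ring
end

section
/- The Wasserstein metric matrix Q is invertible with inverse Q^{-1} = (I - λN) D̂_λ^{-1} (I - λN^T). -/
open Matrix Finset

/-- `Q` is invertible and `Q⁻¹ = (I - λN) D̂_λ⁻¹ (I - λNᵀ)`. -/
theorem wasserstein_inverse_decomposition (n : ℕ) (l : ℝ) (hl : l ∈ Set.Ioo (0:ℝ) 1)
    (Q : Matrix (Fin n) (Fin n) ℝ)
    (hQ : ∀ i j : Fin n, Q i j = l ^ (Nat.dist (i : ℕ) (j : ℕ)))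
    (N : Matrix (Fin n) (Fin n) ℝ)
    (hN : ∀ i j : Fin n, N i j = if (i : ℕ) = (j : ℕ) + 1 then 1 else 0) :
    IsUnit Q ∧
    Q⁻¹ = (1 - l • N) *
      Matrix.diagonal (fun i : Fin n => if (i : ℕ) + 1 < n then (1 - l ^ 2)⁻¹ else 1) *
      (1 - l • Nᵀ) := by
  obtain ⟨hl0, hl1⟩ := hl
  have hne : (1 : ℝ) - l ^ 2 ≠ 0 := by nlinarith
  set d : Fin n → ℝ := fun i => if (i : ℕ) + 1 < n then (1 - l ^ 2)⁻¹ else 1 with hd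
  -- Step 1: entries of Q * (1 - l•N)
  have hG : ∀ i j : Fin n, (Q * (1 - l • N)) i j =
      if (i : ℕ) ≤ (j : ℕ) then (if (j : ℕ) + 1 < n then 1 - l ^ 2 else 1) * l ^ ((j : ℕ) - (i : ℕ)) else 0 := by
    intro i j
    have expand : (Q * (1 - l • N)) i j = Q i j - l * ∑ k, Q i k * N k j := by
      simp [Matrix.mul_apply, Matrix.one_apply, sub_mul, mul_sub, Finset.sum_sub_distrib,
        Finset.mul_sum, mul_comm, mul_left_comm]
    rw [expand]
    by_cases hj : (j : ℕ) + 1 < n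
    · have hsum : ∑ k, Q i k * N k j = Q i ⟨(j : ℕ) + 1, hj⟩ := by
        rw [Finset.sum_eq_single (⟨(j : ℕ) + 1, hj⟩ : Fin n)]
        · rw [hN]; simp
        · intro k _ hk
          rw [hN]
          have : (k : ℕ) ≠ (j : ℕ) + 1 := by
            intro h; apply hk; exact Fin.ext h
          simp [this]
        · simp
      rw [hsum, hQ, hQ]
      simp only [hj, if_true]
      by_cases hij : (i : ℕ) ≤ (j : ℕ)
      · rw [if_pos hij]
        rw [Nat.dist_eq_sub_of_le hij, Nat.dist_eq_sub_of_le (by omega : (i:ℕ) ≤ (j:ℕ)+1)]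
        have h1 : (j : ℕ) + 1 - (i : ℕ) = ((j : ℕ) - (i : ℕ)) + 1 := by omega
        rw [h1, pow_succ]; ring
      · rw [if_neg hij]
        have hji : (j : ℕ) + 1 ≤ (i : ℕ) := by omega
        rw [Nat.dist_eq_sub_of_le_right (by omega : (j:ℕ) ≤ (i:ℕ)),
          Nat.dist_eq_sub_of_le_right hji]
        have h1 : (i : ℕ) - (j : ℕ) = ((i : ℕ) - ((j : ℕ) + 1)) + 1 := by omega
        rw [h1, pow_succ]; ring
    · have hsum : ∑ k, Q i k * N k j = 0 := by
        apply Finset.sum_eq_zero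
        intro k _
        rw [hN]
        have : (k : ℕ) ≠ (j : ℕ) + 1 := by have := k.isLt; omega
        simp [this]
      have hij : (i : ℕ) ≤ (j : ℕ) := by have := i.isLt; omega
      rw [hsum, hQ, if_pos hij, if_neg hj, Nat.dist_eq_sub_of_le hij]
      ring
  -- Step 2: entries of Q * (1 - l•N) * diagonal d
  have hH : ∀ i j : Fin n, ((Q * (1 - l • N)) * Matrix.diagonal d) i j =
      if (i : ℕ) ≤ (j : ℕ) then l ^ ((j : ℕ) - (i : ℕ)) else 0 := by
    intro i j
    rw [Matrix.mul_diagonal, hG]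
    by_cases hij : (i : ℕ) ≤ (j : ℕ)
    · rw [if_pos hij, if_pos hij, hd]
      by_cases hj : (j : ℕ) + 1 < n
      · simp only [hj, if_true]
        field_simp
      · simp [hj]
    · simp [hij]
  -- Step 3: Q * B = 1
  set B : Matrix (Fin n) (Fin n) ℝ :=
    (1 - l • N) * Matrix.diagonal d * (1 - l • Nᵀ) with hB
  have hQB : Q * B = 1 := by
    have assoc : Q * B = ((Q * (1 - l • N)) * Matrix.diagonal d) * (1 - l • Nᵀ) := by
      rw [hB]; noncomm_ring
    rw [assoc]
    ext i j
    have expand : ∀ (X : Matrix (Fin n) (Fin n) ℝ),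
        (X * (1 - l • Nᵀ)) i j = X i j - l * ∑ k, X i k * N j k := by
      intro X
      rw [Matrix.mul_sub, Matrix.mul_one, Matrix.sub_apply, Matrix.mul_smul,
        Matrix.smul_apply, smul_eq_mul, Matrix.mul_apply]
      simp [Matrix.transpose_apply]
    rw [expand]
    by_cases hj : 1 ≤ (j : ℕ)
    · have hj1 : (j : ℕ) - 1 < n := by have := j.isLt; omega
      have hsum : ∑ k, ((Q * (1 - l • N)) * Matrix.diagonal d) i k * N j k
          = ((Q * (1 - l • N)) * Matrix.diagonal d) i ⟨(j : ℕ) - 1, hj1⟩ := by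
        rw [Finset.sum_eq_single (⟨(j : ℕ) - 1, hj1⟩ : Fin n)]
        · rw [hN]
          have hc : (j : ℕ) = ((⟨(j : ℕ) - 1, hj1⟩ : Fin n) : ℕ) + 1 := by simp; omega
          rw [if_pos hc, mul_one]
        · intro k _ hk
          rw [hN]
          have : (j : ℕ) ≠ (k : ℕ) + 1 := by
            intro h; apply hk; exact Fin.ext (show (k : ℕ) = (j : ℕ) - 1 by omega)
          simp [this]
        · simp
      rw [hsum, hH, hH, Matrix.one_apply]
      by_cases hij : i = j
      · subst hij
        simp only [le_refl, if_true, Nat.sub_self, pow_zero, if_pos rfl]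
        have : ¬ ((i : ℕ) ≤ (i : ℕ) - 1) := by omega
        rw [if_neg this]; ring
      · rw [if_neg hij]
        by_cases hle : (i : ℕ) ≤ (j : ℕ)
        · have hle' : (i : ℕ) ≤ (j : ℕ) - 1 := by
            have : (i : ℕ) ≠ (j : ℕ) := fun h => hij (Fin.ext h)
            omega
          rw [if_pos hle, if_pos hle']
          have h1 : (j : ℕ) - (i : ℕ) = ((j : ℕ) - 1 - (i : ℕ)) + 1 := by omega
          rw [h1, pow_succ]; ring
        · have : ¬ ((i : ℕ) ≤ (j : ℕ) - 1) := by omega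
          rw [if_neg hle, if_neg this]; ring
    · have hj0 : (j : ℕ) = 0 := by omega
      have hsum : ∑ k, ((Q * (1 - l • N)) * Matrix.diagonal d) i k * N j k = 0 := by
        apply Finset.sum_eq_zero
        intro k _
        rw [hN]
        have : (j : ℕ) ≠ (k : ℕ) + 1 := by omega
        simp [this]
      rw [hsum, hH, Matrix.one_apply]
      by_cases hij : i = j
      · subst hij; simp
      · have : ¬ ((i : ℕ) ≤ (j : ℕ)) := by
          have : (i : ℕ) ≠ (j : ℕ) := fun h => hij (Fin.ext h)
          omega
        rw [if_neg this, if_neg hij]; ring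
  have hBQ : B * Q = 1 := mul_eq_one_comm.mp hQB
  exact ⟨⟨⟨Q, B, hQB, hBQ⟩, rfl⟩, Matrix.inv_eq_right_inv hQB⟩
end

section
/- The spectral radius of the Wasserstein metric matrix Q satisfies ρ(Q) ≥ 1 + λ, for n ≥ 2. -/
/-!
For a symmetric matrix the spectral radius equals the `L²` operator norm, which dominates every
Rayleigh quotient. The Rayleigh quotient of `Q` at `e₀ + e₁` is `(Q₀₀ + Q₀₁ + Q₁₀ + Q₁₁) / 2`,
which is `1 + λ`.
-/

open Matrix

namespace Matrix

variable {n : Type*} [Fintype n] [DecidableEq n]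

theorem IsHermitian.spectralRadius_eq_nnnorm_toEuclideanCLM {𝕜 : Type*} [RCLike 𝕜]
    {A : Matrix n n 𝕜} (hA : A.IsHermitian) :
    spectralRadius 𝕜 A = ‖toEuclideanCLM (n := n) (𝕜 := 𝕜) A‖₊ := by
  rw [← ContinuousLinearMap.spectralRadius_eq_nnnorm _ (hA.isSelfAdjoint.map toEuclideanCLM),
    spectralRadius, spectralRadius, AlgEquiv.spectrum_eq]

theorem IsHermitian.ofReal_rayleighQuotient_le_spectralRadius {𝕜 : Type*} [RCLike 𝕜]
    {A : Matrix n n 𝕜} (hA : A.IsHermitian) (x : EuclideanSpace 𝕜 n) :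
    ENNReal.ofReal ((toEuclideanCLM (n := n) (𝕜 := 𝕜) A).rayleighQuotient x) ≤
      spectralRadius 𝕜 A := by
  rw [hA.spectralRadius_eq_nnnorm_toEuclideanCLM]
  exact (ENNReal.ofReal_le_ofReal ((le_abs_self _).trans
    (ContinuousLinearMap.rayleighQuotient_le_norm _ x))).trans_eq (ofReal_norm _)

theorem rayleighQuotient_toEuclideanCLM (A : Matrix n n ℝ) (x : EuclideanSpace ℝ n) :
    (toEuclideanCLM (n := n) (𝕜 := ℝ) A).rayleighQuotient x =
      x.ofLp ⬝ᵥ A *ᵥ x.ofLp / (x.ofLp ⬝ᵥ x.ofLp) := by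
  rw [ContinuousLinearMap.rayleighQuotient, ContinuousLinearMap.reApplyInnerSelf_apply,
    real_inner_comm, inner_toEuclideanCLM, ← real_inner_self_eq_norm_sq,
    EuclideanSpace.inner_eq_star_dotProduct]
  simp

theorem single_add_single_dotProduct_mulVec (A : Matrix n n ℝ) (i j : n) :
    (Pi.single i 1 + Pi.single j 1) ⬝ᵥ A *ᵥ (Pi.single i 1 + Pi.single j 1) =
      A i i + A i j + A j i + A j j := by
  simp only [add_dotProduct, mulVec_add, dotProduct_add, single_dotProduct, mulVec_single,
    MulOpposite.op_one, col_apply, one_smul, one_mul]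
  ring

theorem rayleighQuotient_toEuclideanCLM_single_add_single (A : Matrix n n ℝ) {i j : n}
    (hij : i ≠ j) :
    (toEuclideanCLM (n := n) (𝕜 := ℝ) A).rayleighQuotient
        (WithLp.toLp 2 (Pi.single i 1 + Pi.single j 1)) =
      (A i i + A i j + A j i + A j j) / 2 := by
  have hnorm :
      (Pi.single i 1 + Pi.single j 1 : n → ℝ) ⬝ᵥ (Pi.single i 1 + Pi.single j 1) = 2 := by
    simp [hij, hij.symm, one_add_one_eq_two]
  rw [rayleighQuotient_toEuclideanCLM, WithLp.ofLp_toLp, single_add_single_dotProduct_mulVec, hnorm]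

end Matrix

theorem wasserstein_spectralRadius_lower_general (n : ℕ) (hn : 2 ≤ n) (l : ℝ)
    (Q : Matrix (Fin n) (Fin n) ℝ)
    (hQ : ∀ i j : Fin n, Q i j = l ^ (Nat.dist (i : ℕ) (j : ℕ))) :
    ENNReal.ofReal (1 + l) ≤ spectralRadius ℝ Q := by
  have hQ_symm : Q.IsHermitian := by
    ext i j
    simp [hQ, Nat.dist_comm]
  let i₀ : Fin n := ⟨0, by omega⟩
  let i₁ : Fin n := ⟨1, by omega⟩
  have hi : i₀ ≠ i₁ := by simp [i₀, i₁, Fin.ext_iff]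
  have hrayleigh : (toEuclideanCLM (n := Fin n) (𝕜 := ℝ) Q).rayleighQuotient
      (WithLp.toLp 2 (Pi.single i₀ 1 + Pi.single i₁ 1)) = 1 + l := by
    rw [rayleighQuotient_toEuclideanCLM_single_add_single Q hi]
    norm_num [hQ, i₀, i₁, Nat.dist]
    ring
  exact hrayleigh ▸ hQ_symm.ofReal_rayleighQuotient_le_spectralRadius _

/-- The spectral radius of `Q` is at least `1 + λ` (for `n ≥ 2`). -/
theorem wasserstein_spectralRadius_lower (n : ℕ) (hn : 2 ≤ n) (l : ℝ)
    (hl : l ∈ Set.Ioo (0:ℝ) 1)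
    (Q : Matrix (Fin n) (Fin n) ℝ)
    (hQ : ∀ i j : Fin n, Q i j = l ^ (Nat.dist (i : ℕ) (j : ℕ))) :
    ENNReal.ofReal (1 + l) ≤ spectralRadius ℝ Q :=
  wasserstein_spectralRadius_lower_general n hn l Q hQ
end

section
/- If A ∈ ℝ^{n×n} is entrywise nonnegative, then ρ((A + A^T)/2) ≥ ρ(A), where ρ denotes the spectral radius. -/
/-!
If `A *ᵥ v = μ • v`, the triangle inequality and `0 ≤ A` give `‖μ‖ • x ≤ A *ᵥ x` for the
vector `x` of moduli `‖v i‖`, hence `‖μ‖ (x ⬝ᵥ x) ≤ x ⬝ᵥ A *ᵥ x`. The quadratic form of `A` equals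
that of its symmetric part `S`, which is at most `‖S‖ (x ⬝ᵥ x)` for the `L²` operator norm, and
for the self-adjoint `S` this norm is the spectral radius.
-/

open Matrix

namespace Matrix

variable {n : Type*} [Fintype n]

lemma exists_mulVec_eq_smul_of_mem_spectrum {K : Type*} [Field K] [DecidableEq n]
    {A : Matrix n n K} {μ : K} (hμ : μ ∈ spectrum K A) : ∃ v ≠ 0, A *ᵥ v = μ • v := by
  rw [← spectrum_toLin', ← Module.End.hasEigenvalue_iff_mem_spectrum] at hμ
  obtain ⟨v, hv⟩ := hμ.exists_hasEigenvector
  exact ⟨v, hv.2, hv.apply_eq_smul⟩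

lemma norm_map_ofReal_mulVec_le {A : Matrix n n ℝ} (hA : ∀ i j, 0 ≤ A i j) (v : n → ℂ) (i : n) :
    ‖(A.map ((↑) : ℝ → ℂ) *ᵥ v) i‖ ≤ (A *ᵥ fun j => ‖v j‖) i := by
  simp only [mulVec, dotProduct, map_apply]
  refine (norm_sum_le _ _).trans_eq (Finset.sum_congr rfl fun j _ => ?_)
  rw [norm_mul, Complex.norm_real, Real.norm_of_nonneg (hA i j)]

lemma norm_mul_dotProduct_self_le_of_mulVec_eq_smul {A : Matrix n n ℝ}
    (hA : ∀ i j, 0 ≤ A i j) {v : n → ℂ} {μ : ℂ} (hv : A.map ((↑) : ℝ → ℂ) *ᵥ v = μ • v) :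
    ‖μ‖ * ((‖v ·‖) ⬝ᵥ (‖v ·‖)) ≤ (‖v ·‖) ⬝ᵥ (A *ᵥ (‖v ·‖)) := by
  rw [← smul_eq_mul, ← dotProduct_smul]
  refine dotProduct_le_dotProduct_of_nonneg_left (fun i => ?_) (fun i => norm_nonneg _)
  simpa [hv, norm_smul] using norm_map_ofReal_mulVec_le hA v i

lemma dotProduct_half_add_transpose_mulVec {R : Type*} [Field R] [NeZero (2 : R)]
    (A : Matrix n n R) (x : n → R) :
    x ⬝ᵥ ((((1 : R) / 2) • (A + Aᵀ)) *ᵥ x) = x ⬝ᵥ (A *ᵥ x) := by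
  rw [smul_mulVec, dotProduct_smul, add_mulVec, dotProduct_add, dotProduct_transpose_mulVec,
    smul_eq_mul]
  field_simp
  ring

section L2OpNorm

open scoped Matrix.Norms.L2Operator

variable [DecidableEq n]

lemma norm_star_dotProduct_mulVec_le {𝕜 : Type*} [RCLike 𝕜] (A : Matrix n n 𝕜) (x : n → 𝕜) :
    ‖star x ⬝ᵥ (A *ᵥ x)‖ ≤ ‖A‖ * ‖(EuclideanSpace.equiv n 𝕜).symm x‖ ^ 2 := by
  set u := (EuclideanSpace.equiv n 𝕜).symm x
  calc ‖star x ⬝ᵥ (A *ᵥ x)‖ = ‖inner 𝕜 u ((EuclideanSpace.equiv n 𝕜).symm (A *ᵥ x))‖ := by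
        rw [dotProduct_comm]; rfl
    _ ≤ ‖u‖ * (‖A‖ * ‖u‖) := (norm_inner_le_norm _ _).trans (by gcongr; exact l2_opNorm_mulVec A u)
    _ = ‖A‖ * ‖u‖ ^ 2 := by ring

lemma dotProduct_mulVec_le_l2_opNorm_map_ofReal (S : Matrix n n ℝ) (x : n → ℝ) :
    x ⬝ᵥ (S *ᵥ x) ≤ ‖S.map ((↑) : ℝ → ℂ)‖ * (x ⬝ᵥ x) := by
  have h := norm_star_dotProduct_mulVec_le (S.map ((↑) : ℝ → ℂ)) (fun i => (x i : ℂ))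
  have hquad : star (fun i => (x i : ℂ)) ⬝ᵥ (S.map ((↑) : ℝ → ℂ) *ᵥ fun i => (x i : ℂ))
      = ((x ⬝ᵥ (S *ᵥ x) : ℝ) : ℂ) := by
    have hstar : star (fun i => (x i : ℂ)) = fun i => (x i : ℂ) :=
      funext fun i => Complex.conj_ofReal (x i)
    rw [hstar, ← Complex.ofRealHom_eq_coe, Complex.ofRealHom.map_dotProduct]
    congr 1
    funext i
    exact (Complex.ofRealHom.map_mulVec S x i).symm
  have hnorm : ‖(EuclideanSpace.equiv n ℂ).symm (fun i => (x i : ℂ))‖ ^ 2 = x ⬝ᵥ x := by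
    rw [EuclideanSpace.norm_sq_eq]
    simp [dotProduct, sq]
  rw [hquad, hnorm, Complex.norm_real, Real.norm_eq_abs] at h
  exact (le_abs_self _).trans h

lemma IsSymm.spectralRadius_map_ofReal {S : Matrix n n ℝ} (hS : S.IsSymm) :
    spectralRadius ℂ (S.map ((↑) : ℝ → ℂ)) = ‖S.map ((↑) : ℝ → ℂ)‖₊ :=
  ((isHermitian_iff_isSymm.mpr hS).map _ fun _ => (Complex.conj_ofReal _).symm)
    |>.isSelfAdjoint.spectralRadius_eq_nnnorm

end L2OpNorm

end Matrix

/-- For a nonnegative real matrix `A`, the spectral radius of the symmetric part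
`(A + Aᵀ)/2` is at least the spectral radius of `A`. -/
theorem spectralRadius_symm_part_ge (n : ℕ) (A : Matrix (Fin n) (Fin n) ℝ)
    (hA : ∀ i j : Fin n, 0 ≤ A i j) :
    spectralRadius ℂ (A.map (fun t : ℝ => (t : ℂ))) ≤
      spectralRadius ℂ ((((1 : ℝ)/2) • (A + Aᵀ)).map (fun t : ℝ => (t : ℂ))) := by
  set S : Matrix (Fin n) (Fin n) ℝ := ((1 : ℝ) / 2) • (A + Aᵀ)
  rw [((isSymm_add_transpose_self A).smul _).spectralRadius_map_ofReal]
  refine iSup₂_le fun μ hμ => ?_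
  obtain ⟨v, hv0, hv⟩ := exists_mulVec_eq_smul_of_mem_spectrum hμ
  set x : Fin n → ℝ := (‖v ·‖)
  have hx0 : x ≠ 0 := fun h => hv0 (funext fun i => norm_eq_zero.mp (congr_fun h i))
  have hx : 0 < x ⬝ᵥ x := by simpa using dotProduct_star_self_pos_iff.mpr hx0
  open scoped Matrix.Norms.L2Operator in
  have key : ‖μ‖ * (x ⬝ᵥ x) ≤ ‖S.map ((↑) : ℝ → ℂ)‖ * (x ⬝ᵥ x) := calc
    _ ≤ x ⬝ᵥ (A *ᵥ x) := norm_mul_dotProduct_self_le_of_mulVec_eq_smul hA hv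
    _ = x ⬝ᵥ (S *ᵥ x) := (dotProduct_half_add_transpose_mulVec A x).symm
    _ ≤ _ := dotProduct_mulVec_le_l2_opNorm_map_ofReal S x
  exact_mod_cast le_of_mul_le_mul_right key hx
end

section
/- The spectral norm of the Hadamard inverse of the Wasserstein metric matrix satisfies ‖Q^{∘-1}‖_2 ≤ (1/λ^{2(n-1)})·(1-λ^{2n})/(1-λ²). -/
/-!
Since `|i - j| ≤ i + j`, the squared entries `λ^(-2|i-j|)` of `Q^{∘-1}` are dominated by those of
the rank-one matrix `u uᵀ` with `u_k = λ^(-2k)`. Bounding the spectral norm by the Frobenius norm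
then gives `‖Q^{∘-1}‖₂ ≤ ∑_{k<n} λ^(-2k)`, a geometric sum equal to the right-hand side.
-/

open Matrix Finset

namespace Matrix

variable {n : Type*} [Fintype n] [DecidableEq n]

theorem norm_toEuclideanCLM_le_sqrt_sum_sq (A : Matrix n n ℝ) :
    ‖toEuclideanCLM (𝕜 := ℝ) A‖ ≤ √(∑ i, ∑ j, A i j ^ 2) := by
  refine ContinuousLinearMap.opNorm_le_bound _ (Real.sqrt_nonneg _) fun x => ?_
  rw [← Real.sqrt_sq (norm_nonneg x), ← Real.sqrt_mul (by positivity),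
    ← Real.sqrt_sq (norm_nonneg _)]
  refine Real.sqrt_le_sqrt ?_
  rw [EuclideanSpace.real_norm_sq_eq, EuclideanSpace.real_norm_sq_eq, sum_mul]
  exact sum_le_sum fun i _ => sum_mul_sq_le_sq_mul_sq _ _ _

theorem norm_toEuclideanCLM_le_sum_of_sq_le_mul {A : Matrix n n ℝ} {u : n → ℝ}
    (hu : ∀ i, 0 ≤ u i) (hA : ∀ i j, A i j ^ 2 ≤ u i * u j) :
    ‖toEuclideanCLM (𝕜 := ℝ) A‖ ≤ ∑ i, u i := by
  calc ‖toEuclideanCLM (𝕜 := ℝ) A‖ ≤ √(∑ i, ∑ j, A i j ^ 2) :=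
        norm_toEuclideanCLM_le_sqrt_sum_sq A
    _ ≤ √((∑ i, u i) ^ 2) := by
        rw [sq, sum_mul_sum]
        gcongr with i _ j _
        exact hA i j
    _ = ∑ i, u i := Real.sqrt_sq (sum_nonneg fun i _ => hu i)

end Matrix

theorem geom_sum_inv_eq_div {K : Type*} [Field K] {x : K} (hx0 : x ≠ 0) (hx1 : x ≠ 1) (n : ℕ) :
    ∑ i ∈ range n, x⁻¹ ^ i = 1 / x ^ (n - 1) * ((1 - x ^ n) / (1 - x)) := by
  cases n with
  | zero => simp
  | succ m =>
    have h1x : 1 - x ≠ 0 := sub_ne_zero.mpr hx1.symm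
    have hx1' : x - 1 ≠ 0 := sub_ne_zero.mpr hx1
    rw [geom_sum_inv hx1 hx0, Nat.add_sub_cancel, inv_pow]
    field_simp
    ring

theorem sq_inv_pow_dist_le {l : ℝ} (hl0 : 0 < l) (hl1 : l ≤ 1) (i j : ℕ) :
    ((l ^ Nat.dist i j)⁻¹) ^ 2 ≤ (l ^ 2)⁻¹ ^ i * (l ^ 2)⁻¹ ^ j := by
  rw [← pow_add, ← inv_pow, ← pow_mul, mul_comm, pow_mul, inv_pow]
  refine pow_le_pow_right₀ (one_le_inv₀ (by positivity) |>.mpr (pow_le_one₀ hl0.le hl1)) ?_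
  unfold Nat.dist
  omega

/-- The spectral norm of the Hadamard inverse of `Q` is at most
`(1/λ^(2(n-1))) (1-λ^(2n))/(1-λ²)`. -/
theorem wasserstein_hadamard_inv_spectralNorm (n : ℕ) (l : ℝ) (hl : l ∈ Set.Ioo (0:ℝ) 1)
    (H : Matrix (Fin n) (Fin n) ℝ)
    (hH : ∀ i j : Fin n, H i j = (l ^ (Nat.dist (i : ℕ) (j : ℕ)))⁻¹) :
    ‖Matrix.toEuclideanCLM (𝕜 := ℝ) H‖ ≤
      (1 / l ^ (2 * (n - 1))) * ((1 - l ^ (2 * n)) / (1 - l ^ 2)) := by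
  obtain ⟨hl0, hl1⟩ := hl
  have hl2 : l ^ 2 ≠ 1 := (pow_lt_one₀ hl0.le hl1 two_ne_zero).ne
  calc ‖toEuclideanCLM (𝕜 := ℝ) H‖ ≤ ∑ k : Fin n, (l ^ 2)⁻¹ ^ (k : ℕ) :=
        norm_toEuclideanCLM_le_sum_of_sq_le_mul (fun k => by positivity)
          fun i j => hH i j ▸ sq_inv_pow_dist_le hl0 hl1.le i j
    _ = ∑ k ∈ range n, (l ^ 2)⁻¹ ^ k := Fin.sum_univ_eq_sum_range (fun k => (l ^ 2)⁻¹ ^ k) n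
    _ = 1 / l ^ (2 * (n - 1)) * ((1 - l ^ (2 * n)) / (1 - l ^ 2)) := by
        rw [geom_sum_inv_eq_div (by positivity) hl2, pow_mul, pow_mul]
end

section
/- The determinant of the two-dimensional Wasserstein metric matrix Q = Q_{[2]} ⊗ Q_{[1]} equals (1-λ_1²)^{m(n-1)} (1-λ_2²)^{n(m-1)}. -/
open Matrix
open scoped Kronecker

private lemma tele_sum (l : ℝ) (a : ℕ) : ∀ p : ℕ, 2 * p ≤ a →
    (∑ k ∈ Finset.range (p + 1),
      (if k = 0 then (1:ℝ) else 1 - l ^ 2) * l ^ (a - 2 * k)) = l ^ (a - 2 * p) := by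
  intro p
  induction p with
  | zero => simp
  | succ p ih =>
    intro h
    rw [Finset.sum_range_succ, ih (by omega)]
    have h2 : a - 2 * p = (a - 2 * (p + 1)) + 2 := by omega
    rw [h2, if_neg (Nat.succ_ne_zero p)]
    ring

private lemma kms_det (n : ℕ) (l : ℝ) (Q : Matrix (Fin n) (Fin n) ℝ)
    (hQ : ∀ i j : Fin n, Q i j = l ^ (Nat.dist (i : ℕ) (j : ℕ))) :
    Q.det = (1 - l ^ 2) ^ (n - 1) := by
  classical
  set L : Matrix (Fin n) (Fin n) ℝ :=
    fun i j => if (j : ℕ) ≤ (i : ℕ) then l ^ ((i : ℕ) - (j : ℕ)) else 0 with hL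
  set T : Matrix (Fin n) (Fin n) ℝ :=
    fun i j => if (i : ℕ) ≤ (j : ℕ) then
      (if (i : ℕ) = 0 then (1:ℝ) else 1 - l ^ 2) * l ^ ((j : ℕ) - (i : ℕ)) else 0 with hT
  have hQLT : Q = L * T := by
    ext i j
    rw [hQ, Matrix.mul_apply]
    set p : ℕ := min (i : ℕ) (j : ℕ) with hp
    have hterm : ∀ k : Fin n,
        L i k * T k j = if (k : ℕ) ≤ p then
          (if (k : ℕ) = 0 then (1:ℝ) else 1 - l ^ 2) * l ^ ((i : ℕ) + (j : ℕ) - 2 * (k : ℕ))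
        else 0 := by
      intro k
      simp only [hL, hT]
      by_cases hk : (k : ℕ) ≤ p
      · rw [if_pos hk, if_pos (le_trans hk (min_le_right _ _)),
          if_pos (le_trans hk (min_le_left _ _))]
        have he : (i : ℕ) - (k : ℕ) + ((j : ℕ) - (k : ℕ)) = (i : ℕ) + (j : ℕ) - 2 * (k : ℕ) := by
          omega
        rw [← he, pow_add]
        ring
      · rw [if_neg hk]
        rcases Nat.lt_or_ge (i : ℕ) (k : ℕ) with h | h
        · rw [if_neg (by omega : ¬ (k : ℕ) ≤ (i : ℕ))]
          ring
        · rw [if_neg (by omega : ¬ (k : ℕ) ≤ (j : ℕ))]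
          ring
    rw [Finset.sum_congr rfl (fun k _ => hterm k), Fin.sum_univ_eq_sum_range
      (fun k => if k ≤ p then
        (if k = 0 then (1:ℝ) else 1 - l ^ 2) * l ^ ((i : ℕ) + (j : ℕ) - 2 * k) else 0)]
    have hpn : p + 1 ≤ n := by
      have := i.isLt; omega
    rw [← Finset.sum_subset (Finset.range_subset_range.mpr hpn)
      (by intro k _ hk; simp at hk ⊢; omega)]
    have hsum : (∑ k ∈ Finset.range (p + 1), if k ≤ p then
        (if k = 0 then (1:ℝ) else 1 - l ^ 2) * l ^ ((i : ℕ) + (j : ℕ) - 2 * k) else 0)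
        = ∑ k ∈ Finset.range (p + 1),
        (if k = 0 then (1:ℝ) else 1 - l ^ 2) * l ^ ((i : ℕ) + (j : ℕ) - 2 * k) := by
      refine Finset.sum_congr rfl fun k hk => ?_
      rw [if_pos (by simpa [Nat.lt_succ_iff] using Finset.mem_range.mp hk)]
    rw [hsum, tele_sum l _ p (by omega)]
    congr 1
    rw [Nat.dist_eq_max_sub_min]
    omega
  have hLdet : L.det = 1 := by
    rw [Matrix.det_of_lowerTriangular L (fun i j hij => ?_)]
    · have hd : ∀ i : Fin n, L i i = 1 := by
        intro i; simp [hL]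
      rw [Finset.prod_congr rfl (fun i _ => hd i), Finset.prod_const_one]
    · have h' : (i : ℕ) < (j : ℕ) := hij
      simp only [hL]
      rw [if_neg (by omega)]
  have hTdet : T.det = (1 - l ^ 2) ^ (n - 1) := by
    rw [Matrix.det_of_upperTriangular (M := T) (fun i j hij => ?_)]
    · have hd : ∀ i : Fin n, T i i = (if (i : ℕ) = 0 then (1:ℝ) else 1 - l ^ 2) := by
        intro i; simp [hT]
      rw [Finset.prod_congr rfl (fun i _ => hd i),
        Fin.prod_univ_eq_prod_range (fun k => if k = 0 then (1:ℝ) else 1 - l ^ 2)]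
      induction n with
      | zero => simp
      | succ k _ =>
        rw [Finset.prod_range_succ']
        simp only [if_pos rfl, mul_one]
        have h1 : ∀ x ∈ Finset.range k, (if x + 1 = 0 then (1:ℝ) else 1 - l ^ 2)
            = 1 - l ^ 2 := by intro x _; simp
        rw [Finset.prod_congr rfl h1, Finset.prod_const, Finset.card_range]
        simp
    · have h' : (j : ℕ) < (i : ℕ) := hij
      simp only [hT]
      rw [if_neg (by omega)]
  rw [hQLT, Matrix.det_mul, hLdet, hTdet, one_mul]

/-- The determinant of the two-dimensional Wasserstein metric matrix
`Q = Q₂ ⊗ Q₁` is `(1-λ₁²)^(m(n-1)) (1-λ₂²)^(n(m-1))`. -/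
theorem wasserstein_2d_det (n m : ℕ) (l1 l2 : ℝ)
    (hl1 : l1 ∈ Set.Ioo (0:ℝ) 1) (hl2 : l2 ∈ Set.Ioo (0:ℝ) 1)
    (Q1 : Matrix (Fin n) (Fin n) ℝ)
    (hQ1 : ∀ i j : Fin n, Q1 i j = l1 ^ (Nat.dist (i : ℕ) (j : ℕ)))
    (Q2 : Matrix (Fin m) (Fin m) ℝ)
    (hQ2 : ∀ i j : Fin m, Q2 i j = l2 ^ (Nat.dist (i : ℕ) (j : ℕ))) :
    (Q2 ⊗ₖ Q1).det = (1 - l1 ^ 2) ^ (m * (n - 1)) * (1 - l2 ^ 2) ^ (n * (m - 1)) := by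
  rw [Matrix.det_kronecker, kms_det n l1 Q1 hQ1, kms_det m l2 Q2 hQ2,
    Fintype.card_fin, Fintype.card_fin, ← pow_mul, ← pow_mul]
  ring
end

section
/- The spectral radius of the two-dimensional Wasserstein metric matrix Q = Q_{[2]} ⊗ Q_{[1]} satisfies ρ(Q) ≥ (1+λ_1)(1+λ_2), for n, m ≥ 2. -/
/-!
Since `Q` is symmetric, its spectral radius is the operator norm, which bounds every Rayleigh
quotient. The Rayleigh quotient of a Kronecker product at a product vector is the product of the
Rayleigh quotients, and that of the matrix `(λ ^ |i - j|)` at `e₀ + e₁` is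
`(1 + λ + λ + 1) / 2 = 1 + λ`.
-/

open Matrix
open scoped Kronecker

namespace Matrix

section Kronecker

variable {R l m n p : Type*} [CommSemiring R] [Fintype m] [Fintype p]

theorem kronecker_mulVec_mul (A : Matrix l m R) (B : Matrix n p R) (x : m → R) (y : p → R) :
    (A ⊗ₖ B) *ᵥ (fun q : m × p ↦ x q.1 * y q.2) = fun q ↦ (A *ᵥ x) q.1 * (B *ᵥ y) q.2 := by
  ext ⟨i, j⟩
  simp only [mulVec, dotProduct, kroneckerMap_apply, Fintype.sum_prod_type, Finset.sum_mul_sum]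
  exact Finset.sum_congr rfl fun _ _ ↦ Finset.sum_congr rfl fun _ _ ↦ by ring

theorem dotProduct_mul_mul (x x' : m → R) (y y' : p → R) :
    (fun q : m × p ↦ x q.1 * y q.2) ⬝ᵥ (fun q ↦ x' q.1 * y' q.2) = (x ⬝ᵥ x') * (y ⬝ᵥ y') := by
  simp only [dotProduct, Fintype.sum_prod_type, Finset.sum_mul_sum]
  exact Finset.sum_congr rfl fun _ _ ↦ Finset.sum_congr rfl fun _ _ ↦ by ring

end Kronecker

theorem IsHermitian.kronecker {R m n : Type*} [CommRing R] [StarRing R] {A : Matrix m m R}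
    {B : Matrix n n R} (hA : A.IsHermitian) (hB : B.IsHermitian) : (A ⊗ₖ B).IsHermitian := by
  rw [IsHermitian, conjTranspose_kronecker, hA.eq, hB.eq]

theorem isHermitian_of_apply_eq_dist {k : ℕ} {M : Matrix (Fin k) (Fin k) ℝ} {f : ℕ → ℝ}
    (hM : ∀ i j : Fin k, M i j = f (Nat.dist i j)) : M.IsHermitian :=
  IsHermitian.ext fun i j ↦ by simp [hM, Nat.dist_comm]

section Pair

variable {R n : Type*} [CommSemiring R] [Fintype n] [DecidableEq n]

theorem dotProduct_mulVec_single_add_single (A : Matrix n n R) (i j : n) :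
    (Pi.single i 1 + Pi.single j 1) ⬝ᵥ A *ᵥ (Pi.single i 1 + Pi.single j 1) =
      A i i + A i j + A j i + A j j := by
  simp only [mulVec_add, mulVec_single_one, dotProduct_add, add_dotProduct, single_one_dotProduct,
    col_apply]
  ring

theorem dotProduct_single_add_single {i j : n} (hij : i ≠ j) :
    (Pi.single i 1 + Pi.single j 1 : n → R) ⬝ᵥ (Pi.single i 1 + Pi.single j 1) = 2 := by
  simp [dotProduct_add, Pi.single_eq_of_ne hij, Pi.single_eq_of_ne hij.symm, one_add_one_eq_two]

end Pair

section RayleighQuotient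

variable {K m n : Type*} [Field K] [Fintype m] [Fintype n]

/-- Equal to `0` at `v = 0`. -/
def rayleighQuotient (A : Matrix n n K) (v : n → K) : K :=
  v ⬝ᵥ A *ᵥ v / (v ⬝ᵥ v)

theorem rayleighQuotient_kronecker (A : Matrix m m K) (B : Matrix n n K) (x : m → K)
    (y : n → K) :
    rayleighQuotient (A ⊗ₖ B) (fun q ↦ x q.1 * y q.2) =
      rayleighQuotient A x * rayleighQuotient B y := by
  rw [rayleighQuotient, kronecker_mulVec_mul, dotProduct_mul_mul, dotProduct_mul_mul,
    mul_div_mul_comm, rayleighQuotient, rayleighQuotient]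

theorem exists_rayleighQuotient_eq_one_add {k : ℕ} (hk : 2 ≤ k) {M : Matrix (Fin k) (Fin k) ℝ}
    {l : ℝ} (hM : ∀ i j : Fin k, M i j = l ^ Nat.dist i j) :
    ∃ v, rayleighQuotient M v = 1 + l := by
  let i : Fin k := ⟨0, by omega⟩
  let j : Fin k := ⟨1, by omega⟩
  have hij : i ≠ j := by simp [i, j, Fin.ext_iff]
  refine ⟨Pi.single i 1 + Pi.single j 1, ?_⟩
  rw [rayleighQuotient, dotProduct_mulVec_single_add_single, dotProduct_single_add_single hij]
  simp only [hM, i, j, Nat.dist]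
  norm_num
  ring

variable [DecidableEq n]

theorem spectralRadius_toEuclideanCLM (A : Matrix n n ℝ) :
    spectralRadius ℝ (toEuclideanCLM (𝕜 := ℝ) A) = spectralRadius ℝ A := by
  rw [spectralRadius, AlgEquiv.spectrum_eq (toEuclideanCLM (n := n) (𝕜 := ℝ)) A, spectralRadius]

theorem rayleighQuotient_toEuclideanCLM_s18 (A : Matrix n n ℝ) (v : n → ℝ) :
    (toEuclideanCLM (𝕜 := ℝ) A).rayleighQuotient (WithLp.toLp 2 v) = rayleighQuotient A v := by
  rw [ContinuousLinearMap.rayleighQuotient, ContinuousLinearMap.reApplyInnerSelf_apply,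
    real_inner_comm, inner_toEuclideanCLM, ← real_inner_self_eq_norm_sq,
    EuclideanSpace.inner_eq_star_dotProduct]
  rfl

theorem IsHermitian.enorm_rayleighQuotient_le_spectralRadius {A : Matrix n n ℝ}
    (hA : A.IsHermitian) (v : n → ℝ) : ‖rayleighQuotient A v‖ₑ ≤ spectralRadius ℝ A := by
  set T := toEuclideanCLM (𝕜 := ℝ) A
  rw [← spectralRadius_toEuclideanCLM, T.spectralRadius_eq_nnnorm (hA.isSelfAdjoint.map _),
    ← rayleighQuotient_toEuclideanCLM_s18]
  exact ENNReal.coe_le_coe.2 (T.rayleighQuotient_le_norm _)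

end RayleighQuotient

end Matrix

theorem wasserstein_2d_spectralRadius_lower_general (n m : ℕ) (hn : 2 ≤ n) (hm : 2 ≤ m)
    (l1 l2 : ℝ)
    (Q1 : Matrix (Fin n) (Fin n) ℝ)
    (hQ1 : ∀ i j : Fin n, Q1 i j = l1 ^ (Nat.dist (i : ℕ) (j : ℕ)))
    (Q2 : Matrix (Fin m) (Fin m) ℝ)
    (hQ2 : ∀ i j : Fin m, Q2 i j = l2 ^ (Nat.dist (i : ℕ) (j : ℕ))) :
    ENNReal.ofReal ((1 + l1) * (1 + l2)) ≤ spectralRadius ℝ (Q2 ⊗ₖ Q1) := by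
  obtain ⟨x, hx⟩ := exists_rayleighQuotient_eq_one_add hm hQ2
  obtain ⟨y, hy⟩ := exists_rayleighQuotient_eq_one_add hn hQ1
  have hQ : (Q2 ⊗ₖ Q1).IsHermitian :=
    (isHermitian_of_apply_eq_dist hQ2).kronecker (isHermitian_of_apply_eq_dist hQ1)
  calc ENNReal.ofReal ((1 + l1) * (1 + l2))
      ≤ ‖rayleighQuotient (Q2 ⊗ₖ Q1) (fun q ↦ x q.1 * y q.2)‖ₑ := by
        rw [rayleighQuotient_kronecker, hx, hy, mul_comm]
        exact Real.ofReal_le_enorm _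
    _ ≤ spectralRadius ℝ (Q2 ⊗ₖ Q1) := hQ.enorm_rayleighQuotient_le_spectralRadius _

/-- The spectral radius of `Q = Q₂ ⊗ Q₁` is at least `(1+λ₁)(1+λ₂)` for `n, m ≥ 2`. -/
theorem wasserstein_2d_spectralRadius_lower (n m : ℕ) (hn : 2 ≤ n) (hm : 2 ≤ m)
    (l1 l2 : ℝ) (hl1 : l1 ∈ Set.Ioo (0:ℝ) 1) (hl2 : l2 ∈ Set.Ioo (0:ℝ) 1)
    (Q1 : Matrix (Fin n) (Fin n) ℝ)
    (hQ1 : ∀ i j : Fin n, Q1 i j = l1 ^ (Nat.dist (i : ℕ) (j : ℕ)))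
    (Q2 : Matrix (Fin m) (Fin m) ℝ)
    (hQ2 : ∀ i j : Fin m, Q2 i j = l2 ^ (Nat.dist (i : ℕ) (j : ℕ))) :
    ENNReal.ofReal ((1 + l1) * (1 + l2)) ≤ spectralRadius ℝ (Q2 ⊗ₖ Q1) :=
  wasserstein_2d_spectralRadius_lower_general n m hn hm l1 l2 Q1 hQ1 Q2 hQ2
end

section
/- The spectral norm of the strictly lower triangular part L of the Wasserstein metric matrix satisfies ‖L‖_2 ≤ √((n-2+λ²)(1 + (λ⁴-λ^{2n})/(1-λ²))), for n ≥ 2. -/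
open Matrix

lemma opNorm_le_sqrt_sum_sq {n : ℕ} (A : Matrix (Fin n) (Fin n) ℝ) :
    ‖Matrix.toEuclideanCLM (𝕜 := ℝ) A‖ ≤ Real.sqrt (∑ i, ∑ j, (A i j)^2) := by
  refine ContinuousLinearMap.opNorm_le_bound _ (Real.sqrt_nonneg _) fun x => ?_
  have hx : ∀ i, (Matrix.toEuclideanCLM (𝕜 := ℝ) A x) i = ∑ j, A i j * x j := by
    intro i
    have h := Matrix.ofLp_toEuclideanCLM (n := Fin n) (𝕜 := ℝ) A x
    have := congrFun h i
    simpa [Matrix.mulVec, dotProduct] using this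
  rw [EuclideanSpace.norm_eq, EuclideanSpace.norm_eq]
  have key : ∑ i, ‖(Matrix.toEuclideanCLM (𝕜 := ℝ) A x) i‖^2
      ≤ (∑ i, ∑ j, (A i j)^2) * (∑ j, ‖x j‖^2) := by
    rw [Finset.sum_mul]
    refine Finset.sum_le_sum fun i _ => ?_
    rw [hx i, Real.norm_eq_abs, sq_abs]
    calc (∑ j, A i j * x j)^2 ≤ (∑ j, (A i j)^2) * (∑ j, (x j)^2) :=
          Finset.sum_mul_sq_le_sq_mul_sq _ _ _
      _ = (∑ j, (A i j)^2) * (∑ j, ‖x j‖^2) := by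
          simp [Real.norm_eq_abs, sq_abs]
  calc Real.sqrt (∑ i, ‖(Matrix.toEuclideanCLM (𝕜 := ℝ) A x) i‖^2)
      ≤ Real.sqrt ((∑ i, ∑ j, (A i j)^2) * (∑ j, ‖x j‖^2)) := Real.sqrt_le_sqrt key
    _ = Real.sqrt (∑ i, ∑ j, (A i j)^2) * Real.sqrt (∑ j, ‖x j‖^2) := by
          rw [Real.sqrt_mul (by positivity)]

/-- Spectral norm bound for the strictly lower triangular part `L` of the
Wasserstein metric matrix, for `n ≥ 2`. -/
theorem wasserstein_L_spectralNorm (n : ℕ) (hn : 2 ≤ n) (l : ℝ)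
    (hl : l ∈ Set.Ioo (0:ℝ) 1)
    (L : Matrix (Fin n) (Fin n) ℝ)
    (hL : ∀ i j : Fin n, L i j =
      if (j : ℕ) < (i : ℕ) then l ^ ((i : ℕ) - (j : ℕ)) else 0) :
    ‖Matrix.toEuclideanCLM (𝕜 := ℝ) L‖ ≤
      Real.sqrt (((n : ℝ) - 2 + l ^ 2) * (1 + (l ^ 4 - l ^ (2 * n)) / (1 - l ^ 2))) := by
  obtain ⟨hl0, hl1⟩ := hl
  set q : ℝ := l ^ 2 with hq
  have hq0 : 0 < q := by positivity
  have hq1 : q < 1 := by nlinarith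
  have h1q : (0:ℝ) < 1 - q := by linarith
  obtain ⟨m, rfl⟩ : ∃ m, n = m + 1 := ⟨n - 1, by omega⟩
  have hm : 1 ≤ m := by omega
  set B : ℝ := ∑ k ∈ Finset.range m, q ^ (k + 1) with hB
  have hB0 : 0 ≤ B := by positivity
  -- each row sum of squares
  have hrow : ∀ i : Fin (m+1), ∑ j, (L i j)^2 = ∑ k ∈ Finset.range (i:ℕ), q ^ (k+1) := by
    intro i
    have h1 : ∀ j : Fin (m+1), (L i j)^2 =
        if (j:ℕ) < (i:ℕ) then q ^ ((i:ℕ) - (j:ℕ)) else 0 := by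
      intro j
      rw [hL]
      split
      · rw [hq, ← pow_mul, ← pow_mul, mul_comm]
      · simp
    simp_rw [h1]
    rw [Fin.sum_univ_eq_sum_range (fun j => if j < (i:ℕ) then q ^ ((i:ℕ) - j) else 0)]
    have hsub : Finset.range (i:ℕ) ⊆ Finset.range (m+1) :=
      Finset.range_subset_range.mpr i.isLt.le
    rw [← Finset.sum_subset hsub (fun x _ hx => by
      rw [if_neg (by simpa using hx)])]
    rw [Finset.sum_congr rfl (fun j hj => if_pos (Finset.mem_range.mp hj))]
    rw [← Finset.sum_range_reflect (fun k => q ^ (k+1)) (i:ℕ)]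
    refine Finset.sum_congr rfl fun j hj => ?_
    congr 1
    have := Finset.mem_range.mp hj
    omega
  -- total Frobenius-squared bound
  have hF : ∑ i, ∑ j, (L i j)^2 ≤ (m:ℝ) * B := by
    have e1 : ∑ i, ∑ j, (L i j)^2
        = ∑ r ∈ Finset.range (m+1), ∑ k ∈ Finset.range r, q ^ (k+1) :=
      calc ∑ i, ∑ j, (L i j)^2
          = ∑ i : Fin (m+1), ∑ k ∈ Finset.range (i:ℕ), q ^ (k+1) :=
            Finset.sum_congr rfl fun i _ => hrow i
        _ = _ := Fin.sum_univ_eq_sum_range (fun r => ∑ k ∈ Finset.range r, q ^ (k+1)) (m+1)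
    rw [e1, Finset.sum_range_succ' (fun r => ∑ k ∈ Finset.range r, q ^ (k+1)) m]
    simp only [Finset.range_zero, Finset.sum_empty, add_zero]
    calc ∑ r ∈ Finset.range m, ∑ k ∈ Finset.range (r+1), q ^ (k+1)
        ≤ ∑ _r ∈ Finset.range m, B := Finset.sum_le_sum fun r hr =>
          Finset.sum_le_sum_of_subset_of_nonneg
            (Finset.range_subset_range.mpr (Finset.mem_range.mp hr))
            (fun k _ _ => by positivity)
      _ = (m:ℝ) * B := by simp [mul_comm]
  -- geometric series identity
  have hgeo : (∑ k ∈ Finset.range m, q ^ k) * (q - 1) = q ^ m - 1 := geom_sum_mul q m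
  have hBdef : B = q * ∑ k ∈ Finset.range m, q ^ k := by
    rw [Finset.mul_sum]
    exact Finset.sum_congr rfl fun k _ => by ring
  have hBgeo : B * (1 - q) = q - q ^ (m+1) := by
    calc B * (1 - q) = -(q * ((∑ k ∈ Finset.range m, q ^ k) * (q - 1))) := by
          rw [hBdef]; ring
      _ = -(q * (q ^ m - 1)) := by rw [hgeo]
      _ = q - q ^ (m+1) := by ring
  -- B ≤ n - 2 + q
  have hBle : B ≤ ((m+1:ℕ):ℝ) - 2 + q := by
    obtain ⟨m', rfl⟩ : ∃ m', m = m' + 1 := ⟨m - 1, by omega⟩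
    have : B = (∑ k ∈ Finset.range m', q ^ (k + 1 + 1)) + q ^ (0 + 1) :=
      Finset.sum_range_succ' _ m'
    rw [this]
    have hs : ∑ k ∈ Finset.range m', q ^ (k + 1 + 1) ≤ ∑ k ∈ Finset.range m', (1:ℝ) :=
      Finset.sum_le_sum fun k _ => pow_le_one₀ hq0.le hq1.le
    push_cast
    simp only [Finset.sum_const, Finset.card_range, nsmul_eq_mul, mul_one] at hs
    simp only [pow_one]
    linarith
  -- identify the RHS factor
  have hA : 1 + (q ^ 2 - q ^ (m+1)) / (1 - q) = 1 - q + B := by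
    have h2 : q ^ 2 - q ^ (m+1) = (B - q) * (1 - q) := by
      rw [sub_mul, hBgeo]; ring
    rw [h2, mul_div_cancel_right₀ _ h1q.ne']
    ring
  -- powers of l to powers of q
  have hpow4 : l ^ 4 = q ^ 2 := by rw [hq]; ring
  have hpow2n : l ^ (2 * (m+1)) = q ^ (m+1) := by rw [hq, ← pow_mul]
  -- final chain
  have hfin : (m:ℝ) * B ≤ (((m+1:ℕ):ℝ) - 2 + q) * (1 - q + B) := by
    have hc : (0:ℝ) ≤ ((m+1:ℕ):ℝ) - 2 + q := by
      have : (2:ℝ) ≤ ((m+1:ℕ):ℝ) := by exact_mod_cast (by omega : 2 ≤ m + 1)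
      linarith
    have h1 : (1 - q) * B ≤ (1 - q) * (((m+1:ℕ):ℝ) - 2 + q) :=
      mul_le_mul_of_nonneg_left hBle h1q.le
    have hm1 : ((m:ℝ)) = ((m+1:ℕ):ℝ) - 1 := by push_cast; ring
    nlinarith [h1]
  calc ‖Matrix.toEuclideanCLM (𝕜 := ℝ) L‖
      ≤ Real.sqrt (∑ i, ∑ j, (L i j)^2) := opNorm_le_sqrt_sum_sq L
    _ ≤ Real.sqrt ((((m+1:ℕ):ℝ) - 2 + q) * (1 + (l ^ 4 - l ^ (2*(m+1))) / (1 - q))) := by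
        apply Real.sqrt_le_sqrt
        rw [hpow4, hpow2n, hA]
        exact le_trans hF hfin
end
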